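/- Let G be a finite set of monotone functions g : ℝ^{n_g} → ℝ (monotone meaning g(x₁,…,x_{n_g}) ≤ g(y₁,…,y_{n_g}) whenever xᵢ ≤ yᵢ for all i), and let P ⊆ ℝ be well-ordered. Then the set F(G,P), defined as the least set containing P and closed under applying each g ∈ G to elements whose g-value strictly exceeds all of them, is well-ordered. -/

import Mathlib

/-!
Take a strictly decreasing sequence `f` in `F(G,P)` that is minimal bad for the rank (the least
stage of the construction at which an element appears). Every `f n ∉ P` is `g i x` with arguments
below `f n` and of smaller rank; by minimality these arguments form a well-ordered set `T`. Hence
every `f n` lies in `P ∪ ⋃ i, g i '' Tⁿ`, which is well-ordered by Dickson's lemma and monotonicity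
of the `g i`, a contradiction.
-/

/-- The set `F(G,P)` generated from constants in `P` by the family of functions
`g i : ℝ^(ar i) → ℝ`, applying a function only when its value strictly exceeds
all of its arguments. -/
inductive GenF {ι : Type} (ar : ι → ℕ) (g : ∀ i, (Fin (ar i) → ℝ) → ℝ)
    (P : Set ℝ) : ℝ → Prop
  | base (p : ℝ) : p ∈ P → GenF ar g P p
  | step (i : ι) (x : Fin (ar i) → ℝ) : (∀ j, GenF ar g P (x j)) →
      (∀ j, x j < g i x) → GenF ar g P (g i x)

open Set Set.PartiallyWellOrderedOn

section MinBadSeq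

variable {α : Type*} [LinearOrder α]

theorem isBadSeq_le_iff {s : Set α} {f : ℕ → α} :
    IsBadSeq (· ≤ ·) s f ↔ (∀ n, f n ∈ s) ∧ StrictAnti f := by
  simp only [IsBadSeq, not_le, StrictAnti]

theorem StrictAnti.graft {f b : ℕ → α} (hf : StrictAnti f) (hb : StrictAnti b) {n : ℕ}
    (hbf : b 0 < f n) : StrictAnti fun k => if k < n then f k else b (k - n) := by
  refine strictAnti_nat_of_succ_lt fun k => ?_
  by_cases hk : k + 1 < n
  · simp only [hk, k.lt_succ_self.trans hk, if_true]
    exact hf k.lt_succ_self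
  by_cases hkn : k < n
  · obtain rfl : n = k + 1 := by omega
    simp only [hkn, lt_irrefl, if_true, if_false, Nat.sub_self]
    exact hbf.trans (hf k.lt_succ_self)
  · have hsub : k + 1 - n = k - n + 1 := by omega
    simp only [hk, hkn, if_false, hsub]
    exact hb (k - n).lt_succ_self

/-- A descending sequence in this set could be grafted onto `f` at the index witnessing its first
term, lowering the rank there. -/
theorem isPWO_lt_of_isMinBadSeq {rk : α → ℕ} {s : Set α} {f : ℕ → α}
    (hf : IsBadSeq (· ≤ ·) s f) (hmin : ∀ n, IsMinBadSeq (· ≤ ·) rk s n f) :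
    {y ∈ s | ∃ n, rk y < rk (f n) ∧ y < f n}.IsPWO := by
  rw [IsPWO, PartiallyWellOrderedOn.iff_forall_not_isBadSeq]
  intro b hb
  rw [isBadSeq_le_iff] at hf hb
  obtain ⟨-, n, hrk, hlt⟩ := hb.1 0
  refine hmin n (fun k => if k < n then f k else b (k - n)) (fun m hm => (if_pos hm).symm) ?_ ?_
  · simpa using hrk
  · refine isBadSeq_le_iff.2 ⟨fun k => ?_, hf.2.graft hb.2 hlt⟩
    split_ifs
    exacts [hf.1 k, (hb.1 _).1]

end MinBadSeq

theorem isPWO_iUnion_image_pi {ι : Type*} [Finite ι] {α : Type*} [Preorder α] {ar : ι → ℕ}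
    {g : ∀ i, (Fin (ar i) → α) → α} (hmono : ∀ i, Monotone (g i)) {T : Set α}
    (hT : T.IsPWO) : (⋃ i, g i '' univ.pi fun _ => T).IsPWO := by
  have := Fintype.ofFinite ι
  simpa using (Finset.isPWO_sup Finset.univ).2 fun i _ =>
    (IsPWO.pi fun _ => hT).image_of_monotone (hmono i)

namespace GenF

variable {ι : Type} (ar : ι → ℕ) (g : ∀ i, (Fin (ar i) → ℝ) → ℝ) (P : Set ℝ)

/-- The elements of `F(G,P)` built with at most `n` nested applications. -/
def stage : ℕ → Set ℝ
  | 0 => P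
  | n + 1 => stage n ∪ {y | ∃ i x, (∀ j, x j ∈ stage n) ∧ (∀ j, x j < g i x) ∧ g i x = y}

theorem stage_mono : Monotone (stage ar g P) :=
  monotone_nat_of_le_succ fun _ => subset_union_left

theorem iff_exists_mem_stage {y : ℝ} : GenF ar g P y ↔ ∃ n, y ∈ stage ar g P n := by
  constructor
  · intro h
    induction h with
    | base p hp => exact ⟨0, hp⟩
    | step i x _ hlt ih =>
      choose N hN using ih
      refine ⟨Finset.univ.sup N + 1, Or.inr ⟨i, x, fun j => ?_, hlt, rfl⟩⟩
      exact stage_mono ar g P (Finset.le_sup (Finset.mem_univ j)) (hN j)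
  · rintro ⟨n, hn⟩
    induction n generalizing y with
    | zero => exact base y hn
    | succ n ih =>
      obtain hn | ⟨i, x, hx, hlt, rfl⟩ := hn
      exacts [ih hn, step i x (fun j => ih (hx j)) hlt]

/-- The least stage containing `y` (`0` when `y ∉ F(G,P)`). -/
noncomputable def rank (y : ℝ) : ℕ := sInf {n | y ∈ stage ar g P n}

theorem mem_stage_rank {y : ℝ} (hy : GenF ar g P y) : y ∈ stage ar g P (rank ar g P y) :=
  Nat.sInf_mem ((iff_exists_mem_stage ar g P).1 hy)

theorem rank_le {y : ℝ} {n : ℕ} (hy : y ∈ stage ar g P n) : rank ar g P y ≤ n :=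
  Nat.sInf_le hy

theorem exists_eq_apply_of_notMem {y : ℝ} (hy : GenF ar g P y) (hyP : y ∉ P) :
    ∃ i x, g i x = y ∧
      ∀ j, GenF ar g P (x j) ∧ rank ar g P (x j) < rank ar g P y ∧ x j < y := by
  have hmem := mem_stage_rank ar g P hy
  rcases hrank : rank ar g P y with _ | n <;> rw [hrank] at hmem
  · exact absurd hmem hyP
  obtain hmem | ⟨i, x, hx, hlt, rfl⟩ := hmem
  · exact absurd (rank_le ar g P hmem) (by omega)
  refine ⟨i, x, rfl, fun j => ⟨(iff_exists_mem_stage ar g P).2 ⟨n, hx j⟩, ?_, hlt j⟩⟩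
  exact Nat.lt_succ_of_le (rank_le ar g P (hx j))

end GenF

theorem genF_wellOrdered {ι : Type} [Finite ι] (ar : ι → ℕ)
    (g : ∀ i, (Fin (ar i) → ℝ) → ℝ) (hmono : ∀ i, Monotone (g i))
    (P : Set ℝ) (hP : P.WellFoundedOn (· < ·)) :
    {x : ℝ | GenF ar g P x}.WellFoundedOn (· < ·) := by
  rw [← IsWF, ← isPWO_iff_isWF, IsPWO,
    PartiallyWellOrderedOn.iff_not_exists_isMinBadSeq (GenF.rank ar g P)]
  rintro ⟨f, hbad, hmin⟩
  have hPpwo : P.IsPWO := isPWO_iff_isWF.2 hP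
  set T := P ∪ {y ∈ {x | GenF ar g P x} |
    ∃ n, GenF.rank ar g P y < GenF.rank ar g P (f n) ∧ y < f n}
  have hT : T.IsPWO := hPpwo.union (isPWO_lt_of_isMinBadSeq hbad hmin)
  have hf : ∀ n, f n ∈ P ∪ ⋃ i, g i '' univ.pi fun _ => T := by
    intro n
    by_cases hn : f n ∈ P
    · exact Or.inl hn
    obtain ⟨i, x, hx, hargs⟩ := GenF.exists_eq_apply_of_notMem ar g P (hbad.1 n) hn
    exact Or.inr (mem_iUnion.2 ⟨i, x, fun j _ => Or.inr ⟨(hargs j).1, n, (hargs j).2⟩, hx⟩)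
  have hS := hPpwo.union (isPWO_iUnion_image_pi hmono hT)
  exact (PartiallyWellOrderedOn.iff_forall_not_isBadSeq _ _).1 hS f ⟨hf, hbad.2⟩
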